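/- arXiv:2101.08223 — 2 statements merged into one kernel-verified Lean document; each statement's English description precedes it below -/
import Mathlib

section
/- The 3DSMI instance of dimension 4 with vertex set {v_0,…,v_8, w_2, w_3, w_4} (vertex v_i or w_i having gender i mod 3, edges going from gender g to gender (g+1) mod 3), whose edges are: v_i → v_{(i+1) mod 9} for i = 0,…,8 with rank 1; w_i → v_{i-2} for i = 2,3,4 with rank 1; v_i → w_{i+1} for i = 1,2,3 with rank 2; and v_i → v_{(i+4) mod 9} for i = 0,…,8, with rank 2 for i ∈ {0,4,5,6,7,8} and rank 3 for i ∈ {1,2,3}, admits no weakly stable matching. -/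
/-- A 3DSMI instance of dimension `n`: a directed graph on a vertex set `V`
partitioned into three genders (men, women, dogs), each of size `n`, where every
edge goes from gender `g` to gender `g+1`, together with a rank function such that
for every vertex of out-degree `k` the ranks of its outgoing edges are exactly
`1, …, k`. -/
structure TDSMI (V : Type) [Fintype V] [DecidableEq V] (n : ℕ) where
  E : V → V → Bool
  r : V → V → ℕ
  gender : V → Fin 3
  gender_card : ∀ g : Fin 3, (Finset.univ.filter fun v => gender v = g).card = n
  edge_gender : ∀ v w : V, E v w → gender w = gender v + 1
  rank_bij : ∀ v : V,
    (Finset.univ.filter fun w => E v w).image (r v)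
      = Finset.Icc 1 (Finset.univ.filter fun w => E v w).card

namespace TDSMI

variable {V : Type} [Fintype V] [DecidableEq V] {n : ℕ}

/-- A family: a directed 3-cycle `a → b → c → a`. -/
def IsFamily (G : TDSMI V n) (a b c : V) : Prop :=
  G.E a b ∧ G.E b c ∧ G.E c a

/-- `v` is one of the vertices of the triple `t`. -/
def MemTriple (v : V) (t : V × V × V) : Prop :=
  v = t.1 ∨ v = t.2.1 ∨ v = t.2.2

/-- A matching: a set of pairwise vertex-disjoint families. -/
def IsMatching (G : TDSMI V n) (F : Finset (V × V × V)) : Prop :=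
  (∀ t ∈ F, G.IsFamily t.1 t.2.1 t.2.2) ∧
  ∀ t ∈ F, ∀ t' ∈ F, t ≠ t' → ∀ v : V, ¬ (MemTriple v t ∧ MemTriple v t')

/-- `w` is the vertex that the edge leaving `v` inside its family of `F` points to. -/
def MatchedTo (F : Finset (V × V × V)) (v w : V) : Prop :=
  ∃ t ∈ F, (t.1 = v ∧ t.2.1 = w) ∨ (t.2.1 = v ∧ t.2.2 = w) ∨ (t.2.2 = v ∧ t.1 = w)

/-- `r(v,w) < R_F(v)`: the rank of the edge `v → w` is smaller than the rank of `v` in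
the matching `F` (if `v` is in no family of `F`, its rank is `+∞` and this holds
vacuously). -/
def Prefers (G : TDSMI V n) (F : Finset (V × V × V)) (v w : V) : Prop :=
  ∀ u : V, MatchedTo F v u → G.r v w < G.r v u

/-- The directed 3-cycle `(a, b, c)` blocks the matching `F`. -/
def Blocks (G : TDSMI V n) (F : Finset (V × V × V)) (a b c : V) : Prop :=
  G.IsFamily a b c ∧ G.Prefers F a b ∧ G.Prefers F b c ∧ G.Prefers F c a

/-- A matching is weakly stable if no directed 3-cycle blocks it. -/
def WeaklyStable (G : TDSMI V n) (F : Finset (V × V × V)) : Prop :=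
  ∀ a b c : V, ¬ G.Blocks F a b c

end TDSMI

/- Vertices `0,…,8` are `v_0,…,v_8`; vertices `9, 10, 11` are `w_2, w_3, w_4`. -/

def rank1Edges : List (ℕ × ℕ) :=
  [(0,1),(1,2),(2,3),(3,4),(4,5),(5,6),(6,7),(7,8),(8,0),(9,0),(10,1),(11,2)]
def rank2Edges : List (ℕ × ℕ) :=
  [(1,9),(2,10),(3,11),(0,4),(4,8),(5,0),(6,1),(7,2),(8,3)]
def rank3Edges : List (ℕ × ℕ) := [(1,5),(2,6),(3,7)]

/-- The 3DSMI instance of dimension 4 from the Appendix of the paper. -/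
def G4 : TDSMI (Fin 12) 4 where
  E v w := decide ((v.val, w.val) ∈ rank1Edges ++ rank2Edges ++ rank3Edges)
  r v w :=
    if (v.val, w.val) ∈ rank1Edges then 1
    else if (v.val, w.val) ∈ rank2Edges then 2
    else if (v.val, w.val) ∈ rank3Edges then 3
    else 0
  gender v := ⟨(if v.val < 9 then v.val else v.val - 7) % 3, Nat.mod_lt _ (by norm_num)⟩
  gender_card := by decide
  edge_gender := by decide
  rank_bij := by decide


/-!
Every family of the instance is a rotation of one of twelve triples, and rotating a family
changes neither the vertices it covers nor the edges it uses. So every matching assigns the same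
ranks as a set of pairwise disjoint triples among those twelve. There are only fifty such sets,
and each is blocked by one of the twelve families, which the kernel checks by evaluation.
-/

namespace TDSMI

variable {V : Type}

def VertexDisjoint (t t' : V × V × V) : Prop :=
  ∀ v : V, ¬ (MemTriple v t ∧ MemTriple v t')

def CycleEdge (t : V × V × V) (v w : V) : Prop :=
  (t.1 = v ∧ t.2.1 = w) ∨ (t.2.1 = v ∧ t.2.2 = w) ∨ (t.2.2 = v ∧ t.1 = w)

def rotate (t : V × V × V) : V × V × V := (t.2.1, t.2.2, t.1)

theorem memTriple_rotate (v : V) (t : V × V × V) : MemTriple v (rotate t) ↔ MemTriple v t := by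
  simp only [MemTriple, rotate]
  tauto

theorem cycleEdge_rotate (t : V × V × V) (v w : V) :
    CycleEdge (rotate t) v w ↔ CycleEdge t v w := by
  simp only [CycleEdge, rotate]
  tauto

section Ranks

variable [Fintype V] [DecidableEq V] {n : ℕ}

theorem prefers_congr (G : TDSMI V n) {F F' : Finset (V × V × V)}
    (h : ∀ v w, MatchedTo F v w ↔ MatchedTo F' v w) (v w : V) :
    G.Prefers F v w ↔ G.Prefers F' v w :=
  forall_congr' fun u => imp_congr_left (h v u)

theorem blocks_congr (G : TDSMI V n) {F F' : Finset (V × V × V)}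
    (h : ∀ v w, MatchedTo F v w ↔ MatchedTo F' v w) (a b c : V) :
    G.Blocks F a b c ↔ G.Blocks F' a b c := by
  simp only [Blocks, prefers_congr G h]

end Ranks

section Canonical

variable [LinearOrder V]

def canon (t : V × V × V) : V × V × V :=
  if t.1 ≤ t.2.1 ∧ t.1 ≤ t.2.2 then t
  else if t.2.1 ≤ t.2.2 then rotate t
  else rotate (rotate t)

theorem canon_eq_or (t : V × V × V) :
    canon t = t ∨ canon t = rotate t ∨ canon t = rotate (rotate t) := by
  unfold canon
  split_ifs <;> simp

theorem memTriple_canon (v : V) (t : V × V × V) : MemTriple v (canon t) ↔ MemTriple v t := by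
  rcases canon_eq_or t with h | h | h <;> simp only [h, memTriple_rotate]

theorem cycleEdge_canon (t : V × V × V) (v w : V) :
    CycleEdge (canon t) v w ↔ CycleEdge t v w := by
  rcases canon_eq_or t with h | h | h <;> simp only [h, cycleEdge_rotate]

theorem matchedTo_image_canon (F : Finset (V × V × V)) (v w : V) :
    MatchedTo (F.image canon) v w ↔ MatchedTo F v w := by
  change (∃ s ∈ F.image canon, CycleEdge s v w) ↔ ∃ t ∈ F, CycleEdge t v w
  simp only [Finset.exists_mem_image, cycleEdge_canon]

theorem IsMatching.exists_sublist_pairwise_vertexDisjoint [Fintype V] {n : ℕ}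
    {G : TDSMI V n} {F : Finset (V × V × V)} (hF : G.IsMatching F) (L : List (V × V × V))
    (hL : ∀ a b c, G.IsFamily a b c → canon (a, b, c) ∈ L) :
    ∃ l ∈ L.sublists, l.Pairwise VertexDisjoint ∧
      ∀ v w, MatchedTo l.toFinset v w ↔ MatchedTo F v w := by
  obtain ⟨hfam, hdisj⟩ := hF
  set l := (L.filter (· ∈ F.image canon)).dedup
  have mem_l : ∀ s, s ∈ l ↔ s ∈ F.image canon := fun s => by
    simp only [l, List.mem_dedup, List.mem_filter, decide_eq_true_eq, and_iff_right_iff_imp]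
    intro hs
    obtain ⟨t, ht, rfl⟩ := Finset.mem_image.1 hs
    exact hL _ _ _ (hfam t ht)
  refine ⟨l, List.mem_sublists.2 ((List.dedup_sublist _).trans List.filter_sublist),
    (List.nodup_dedup _).pairwise_of_forall_ne fun s hs s' hs' hne v hv => ?_, fun v w => ?_⟩
  · obtain ⟨t, ht, rfl⟩ := Finset.mem_image.1 ((mem_l s).1 hs)
    obtain ⟨t', ht', rfl⟩ := Finset.mem_image.1 ((mem_l s').1 hs')
    exact hdisj t ht t' ht' (ne_of_apply_ne canon hne) v
      ⟨(memTriple_canon v t).1 hv.1, (memTriple_canon v t').1 hv.2⟩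
  · have hl : l.toFinset = F.image canon := by
      ext s
      rw [List.mem_toFinset, mem_l]
    rw [hl, matchedTo_image_canon]

end Canonical

section Decidable

variable [Fintype V] [DecidableEq V] {n : ℕ}

instance (G : TDSMI V n) (a b c : V) : Decidable (G.IsFamily a b c) :=
  inferInstanceAs (Decidable (_ ∧ _))

instance (v : V) (t : V × V × V) : Decidable (MemTriple v t) :=
  inferInstanceAs (Decidable (_ ∨ _))

instance (t t' : V × V × V) : Decidable (VertexDisjoint t t') :=
  inferInstanceAs (Decidable (∀ _, _))

instance (F : Finset (V × V × V)) (v w : V) : Decidable (MatchedTo F v w) :=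
  inferInstanceAs (Decidable (∃ _ ∈ F, _))

instance (G : TDSMI V n) (F : Finset (V × V × V)) (v w : V) : Decidable (G.Prefers F v w) :=
  inferInstanceAs (Decidable (∀ _, _))

instance (G : TDSMI V n) (F : Finset (V × V × V)) (a b c : V) : Decidable (G.Blocks F a b c) :=
  inferInstanceAs (Decidable (_ ∧ _))

end Decidable

end TDSMI

open TDSMI

def G4Families : List (Fin 12 × Fin 12 × Fin 12) :=
  [(2,3,11), (0,1,9), (1,2,10), (3,4,8), (0,4,5), (0,1,5),
    (0,4,8), (1,2,6), (1,5,6), (2,3,7), (2,6,7), (3,7,8)]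

theorem G4.canon_mem_families (a b c : Fin 12) (h : G4.IsFamily a b c) :
    canon (a, b, c) ∈ G4Families := by
  revert a b c
  decide

set_option maxRecDepth 10000 in
theorem G4.exists_blocks_of_pairwise_vertexDisjoint :
    ∀ l ∈ G4Families.sublists, l.Pairwise VertexDisjoint →
      ∃ t ∈ G4Families, G4.Blocks l.toFinset t.1 t.2.1 t.2.2 := by
  decide +kernel

/-- This instance admits no weakly stable matching. -/
theorem stmt_4 : ¬ ∃ F : Finset (Fin 12 × Fin 12 × Fin 12),
    G4.IsMatching F ∧ G4.WeaklyStable F := by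
  rintro ⟨F, hF, hstable⟩
  obtain ⟨l, hl, hdisj, hmatched⟩ :=
    hF.exists_sublist_pairwise_vertexDisjoint G4Families G4.canon_mem_families
  obtain ⟨t, -, hblocks⟩ := G4.exists_blocks_of_pairwise_vertexDisjoint l hl hdisj
  exact hstable _ _ _ ((G4.blocks_congr hmatched _ _ _).1 hblocks)
end

section
/- In the 3DSMI instance of dimension 4 on vertices {v_0,…,v_8, w_2, w_3, w_4} with edges v_i → v_{(i+1) mod 9} (i = 0,…,8) of rank 1, w_i → v_{i-2} (i = 2,3,4) of rank 1, v_i → w_{i+1} (i = 1,2,3) of rank 2, and v_i → v_{(i+4) mod 9} (i = 0,…,8) of rank 2 for i ∈ {0,4,5,6,7,8} and rank 3 for i ∈ {1,2,3}: for every i ∈ {0,…,8} (indices mod 9), every matching 𝓜 consisting of the two families (v_i, v_{i+1}, x) and (v_{i+2}, v_{i+3}, y), where x is v_{i+5} or w_{i+2} (the latter only if w_{i+2} exists) and y is v_{i+7} or w_{i+4} (the latter only if w_{i+4} exists), is blocked by the directed 3-cycle (v_{i+3}, v_{i+4}, v_{i+8}). -/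
/-- The vertex `v_{i mod 9}`. -/
def vx (i : ℕ) : Fin 12 := ⟨i % 9, by omega⟩

/-- The vertex `w_{i mod 9}` (meaningful for `i mod 9 ∈ {2,3,4}`). -/
def wv (i : ℕ) : Fin 12 := ⟨(i % 9 + 7) % 12, by omega⟩

namespace TDSMI

variable {V : Type} [DecidableEq V] {a b c a' b' c' v u : V}

theorem matchedTo_pair (h : MatchedTo {(a, b, c), (a', b', c')} v u) :
    (a = v ∧ b = u ∨ b = v ∧ c = u ∨ c = v ∧ a = u) ∨
      (a' = v ∧ b' = u ∨ b' = v ∧ c' = u ∨ c' = v ∧ a' = u) := by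
  simpa only [MatchedTo, Finset.mem_insert, Finset.mem_singleton, exists_eq_or_imp,
    exists_eq_left] using h

theorem not_matchedTo_pair (ha : a ≠ v) (hb : b ≠ v) (hc : c ≠ v) (ha' : a' ≠ v)
    (hb' : b' ≠ v) (hc' : c' ≠ v) : ¬ MatchedTo {(a, b, c), (a', b', c')} v u := fun h => by
  rcases matchedTo_pair h with (h | h | h) | (h | h | h) <;> simp_all

theorem eq_of_matchedTo_pair (ha : a ≠ v) (hb : b ≠ v) (hc : c ≠ v) (ha' : a' ≠ v)
    (hc' : c' ≠ v) (h : MatchedTo {(a, b, c), (a', v, c')} v u) : u = c' := by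
  rcases matchedTo_pair h with (h | h | h) | (h | h | h) <;> simp_all

end TDSMI

theorem vx_mod (k : ℕ) : vx (k % 9) = vx k := by
  ext; simp [vx]

theorem vx_add_mod (k c : ℕ) : vx (k % 9 + c) = vx (k + c) := by
  ext; simp only [vx]; omega

theorem wv_add_mod (k c : ℕ) : wv (k % 9 + c) = wv (k + c) := by
  ext; simp only [wv]; omega

theorem vx_ne_vx {a b : ℕ} (h : a % 9 ≠ b % 9) : vx a ≠ vx b := by
  simpa [vx, Fin.ext_iff] using h

theorem vx_ne_wv (k : ℕ) {m : ℕ} (hm : m % 9 ∈ ({2, 3, 4} : Set ℕ)) : vx k ≠ wv m := by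
  simp only [Set.mem_insert_iff, Set.mem_singleton_iff] at hm
  simp only [ne_eq, vx, wv, Fin.ext_iff]
  omega

theorem ne_vx_of_eq_or {i c d k : ℕ} {x : Fin 12}
    (hx : x = vx (i + c) ∨ ((i + d) % 9 ∈ ({2, 3, 4} : Set ℕ) ∧ x = wv (i + d)))
    (hk : k % 9 ≠ c % 9) : x ≠ vx (i + k) := by
  rcases hx with rfl | ⟨hd, rfl⟩
  · exact vx_ne_vx (by omega)
  · exact (vx_ne_wv _ hd).symm

theorem forall_vx_of_forall_fin {P : Fin 12 → Fin 12 → Prop} {c : ℕ}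
    (h : ∀ j : Fin 9, P (vx j) (vx (j + c))) (k : ℕ) : P (vx k) (vx (k + c)) := by
  simpa only [vx_mod, vx_add_mod] using h ⟨k % 9, Nat.mod_lt _ (by norm_num)⟩

theorem G4_E_vx_add_one (k : ℕ) : G4.E (vx k) (vx (k + 1)) :=
  forall_vx_of_forall_fin (P := fun a b => G4.E a b) (by decide) k

theorem G4_r_vx_add_one (k : ℕ) : G4.r (vx k) (vx (k + 1)) = 1 :=
  forall_vx_of_forall_fin (P := fun a b => G4.r a b = 1) (by decide) k

theorem G4_E_vx_add_four (k : ℕ) : G4.E (vx k) (vx (k + 4)) :=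
  forall_vx_of_forall_fin (P := fun a b => G4.E a b) (by decide) k

theorem G4_two_le_r_vx_add_four (k : ℕ) : 2 ≤ G4.r (vx k) (vx (k + 4)) :=
  forall_vx_of_forall_fin (P := fun a b => 2 ≤ G4.r a b) (by decide) k

theorem G4_r_vx_wv_add_one {k : ℕ} (hk : (k + 1) % 9 ∈ ({2, 3, 4} : Set ℕ)) :
    G4.r (vx k) (wv (k + 1)) = 2 := by
  simp only [Set.mem_insert_iff, Set.mem_singleton_iff] at hk
  rw [← vx_mod, ← wv_add_mod]
  rcases (by omega : k % 9 = 1 ∨ k % 9 = 2 ∨ k % 9 = 3) with h | h | h <;> rw [h] <;> decide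

theorem stmt_16_general (i : ℕ) (x y : Fin 12)
    (hx : x = vx (i + 5) ∨ ((i + 2) % 9 ∈ ({2, 3, 4} : Set ℕ) ∧ x = wv (i + 2)))
    (hy : y = vx (i + 7) ∨ ((i + 4) % 9 ∈ ({2, 3, 4} : Set ℕ) ∧ y = wv (i + 4))) :
    G4.Blocks {(vx i, vx (i + 1), x), (vx (i + 2), vx (i + 3), y)}
      (vx (i + 3)) (vx (i + 4)) (vx (i + 8)) := by
  have hry : 2 ≤ G4.r (vx (i + 3)) y := by
    rcases hy with rfl | ⟨hd, rfl⟩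
    · simpa only [add_assoc] using G4_two_le_r_vx_add_four (i + 3)
    · exact (G4_r_vx_wv_add_one hd).ge
  have h_cycle : vx (i + 8 + 4) = vx (i + 3) := by
    ext; simp only [vx]; omega
  refine ⟨⟨G4_E_vx_add_one _, G4_E_vx_add_four _, h_cycle ▸ G4_E_vx_add_four _⟩, ?_, ?_, ?_⟩
  · intro u hu
    obtain rfl := TDSMI.eq_of_matchedTo_pair (vx_ne_vx (by omega)) (vx_ne_vx (by omega))
      (ne_vx_of_eq_or hx (by omega)) (vx_ne_vx (by omega)) (ne_vx_of_eq_or hy (by omega)) hu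
    rw [G4_r_vx_add_one]
    omega
  all_goals
    refine fun u hu => absurd hu (TDSMI.not_matchedTo_pair ?_ ?_ ?_ ?_ ?_ ?_)
    all_goals first
      | exact vx_ne_vx (by omega)
      | exact ne_vx_of_eq_or hx (by omega)
      | exact ne_vx_of_eq_or hy (by omega)

/-- For every `i` (indices mod 9), every matching consisting of the two families
`(v_i, v_{i+1}, x)` and `(v_{i+2}, v_{i+3}, y)`, where `x` is `v_{i+5}` or `w_{i+2}`
(the latter only if `w_{i+2}` exists) and `y` is `v_{i+7}` or `w_{i+4}` (the latter
only if `w_{i+4}` exists), is blocked by the directed 3-cycle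
`(v_{i+3}, v_{i+4}, v_{i+8})`. -/
theorem stmt_16 (i : ℕ) (x y : Fin 12)
    (hx : x = vx (i + 5) ∨ ((i + 2) % 9 ∈ ({2, 3, 4} : Set ℕ) ∧ x = wv (i + 2)))
    (hy : y = vx (i + 7) ∨ ((i + 4) % 9 ∈ ({2, 3, 4} : Set ℕ) ∧ y = wv (i + 4)))
    (hM : G4.IsMatching {(vx i, vx (i + 1), x), (vx (i + 2), vx (i + 3), y)}) :
    G4.Blocks {(vx i, vx (i + 1), x), (vx (i + 2), vx (i + 3), y)}
      (vx (i + 3)) (vx (i + 4)) (vx (i + 8)) :=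
  stmt_16_general i x y hx hy
end
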